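/- arXiv:1706.09765 — 9 statements merged into one kernel-verified Lean document; each statement's English description precedes it below -/
import Mathlib

section
/- The only numerical semigroups that are both Arf and symmetric are the hyperelliptic semigroups, i.e., semigroups generated by 2 and an odd integer. -/
structure NumericalSemigroup where
  carrier : Set ℕ
  zero_mem : 0 ∈ carrier
  add_mem : ∀ {a b : ℕ}, a ∈ carrier → b ∈ carrier → a + b ∈ carrier
  finite_compl : Set.Finite carrierᶜ

namespace NumericalSemigroup

/-- The genus: the number of gaps. -/
noncomputable def genus (Λ : NumericalSemigroup) : ℕ := Λ.carrierᶜ.ncard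

/-- The conductor: the smallest `c` with `c + ℕ ⊆ Λ`. -/
noncomputable def conductor (Λ : NumericalSemigroup) : ℕ := sInf {c : ℕ | ∀ n, c ≤ n → n ∈ Λ.carrier}

/-- `f` is the (unique) increasing enumeration of `Λ`. -/
noncomputable def IsEnum (Λ : NumericalSemigroup) (f : ℕ → ℕ) : Prop :=
  StrictMono f ∧ Set.range f = Λ.carrier

/-- The Arf property: `λ_i + λ_j - λ_k ∈ Λ` for all `i ≥ j ≥ k`. -/
noncomputable def IsArf (Λ : NumericalSemigroup) : Prop :=
  ∀ f : ℕ → ℕ, Λ.IsEnum f → ∀ i j k : ℕ, k ≤ j → j ≤ i → f i + f j - f k ∈ Λ.carrier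

end NumericalSemigroup

/-- Membership in the semigroup generated by 2 and an odd `m`. -/
lemma aux_gen2m {m : ℕ} (hm : Odd m) (n : ℕ) :
    (∃ a b : ℕ, n = 2 * a + m * b) ↔ (n % 2 = 0 ∨ m ≤ n) := by
  have hm' : m % 2 = 1 := Nat.odd_iff.mp hm
  constructor
  · rintro ⟨a, b, rfl⟩
    rcases Nat.even_or_odd b with ⟨j, rfl⟩ | ⟨j, rfl⟩
    · left
      have : 2 * a + m * (j + j) = 2 * (a + m * j) := by ring
      omega
    · right
      have h1 : m * (2 * j + 1) = 2 * (m * j) + m := by ring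
      omega
  · rintro (h | h)
    · exact ⟨n / 2, 0, by omega⟩
    · rcases Nat.even_or_odd n with hn | hn
      · have := Nat.even_iff.mp hn
        exact ⟨n / 2, 0, by omega⟩
      · have hn' := Nat.odd_iff.mp hn
        exact ⟨(n - m) / 2, 1, by omega⟩

lemma aux_carrier_infinite (Λ : NumericalSemigroup) : Λ.carrier.Infinite := by
  have := Λ.finite_compl.infinite_compl
  rwa [compl_compl] at this

lemma aux_conductor_mem (Λ : NumericalSemigroup) :
    ∀ n, Λ.conductor ≤ n → n ∈ Λ.carrier := by
  have hne : {c : ℕ | ∀ n, c ≤ n → n ∈ Λ.carrier}.Nonempty := by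
    obtain ⟨N, hN⟩ := Λ.finite_compl.bddAbove
    refine ⟨N + 1, fun n hn => ?_⟩
    by_contra h
    have := hN h
    omega
  exact Nat.sInf_mem hne

lemma aux_frob_not_mem (Λ : NumericalSemigroup) (hc : 1 ≤ Λ.conductor) :
    Λ.conductor - 1 ∉ Λ.carrier := by
  intro h
  have : Λ.conductor ≤ Λ.conductor - 1 := by
    apply Nat.sInf_le
    intro n hn
    rcases eq_or_lt_of_le hn with rfl | hlt
    · exact h
    · exact aux_conductor_mem Λ n (by omega)
  omega

/-- Elementwise form of the Arf property. -/
lemma aux_arf_elem (Λ : NumericalSemigroup) (h : Λ.IsArf) :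
    ∀ x ∈ Λ.carrier, ∀ y ∈ Λ.carrier, ∀ z ∈ Λ.carrier,
      z ≤ y → y ≤ x → x + y - z ∈ Λ.carrier := by
  intro x hx y hy z hz hzy hyx
  have hinf : (setOf (· ∈ Λ.carrier)).Infinite := aux_carrier_infinite Λ
  set f := Nat.nth (· ∈ Λ.carrier) with hf
  have hmono : StrictMono f := Nat.nth_strictMono hinf
  have hrange : Set.range f = Λ.carrier := Nat.range_nth_of_infinite hinf
  have henum : Λ.IsEnum f := ⟨hmono, hrange⟩
  obtain ⟨i, hi⟩ : x ∈ Set.range f := hrange ▸ hx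
  obtain ⟨j, hj⟩ : y ∈ Set.range f := hrange ▸ hy
  obtain ⟨k, hk⟩ : z ∈ Set.range f := hrange ▸ hz
  have hkj : k ≤ j := hmono.le_iff_le.mp (by rw [hj, hk]; exact hzy)
  have hji : j ≤ i := hmono.le_iff_le.mp (by rw [hi, hj]; exact hyx)
  have := h f henum i j k hkj hji
  rwa [hi, hj, hk] at this

/-- Symmetry: every gap is the Frobenius number minus a nongap. -/
lemma aux_symm_gap (Λ : NumericalSemigroup) (hc : Λ.conductor = 2 * Λ.genus)
    {t : ℕ} (ht : t ∉ Λ.carrier) : Λ.conductor - 1 - t ∈ Λ.carrier := by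
  set c := Λ.conductor with hcdef
  have htc : t < c := by
    by_contra h
    exact ht (aux_conductor_mem Λ t (by omega))
  have hc1 : 1 ≤ c := by omega
  have hF : c - 1 ∉ Λ.carrier := aux_frob_not_mem Λ hc1
  -- the complement is contained in Iio c
  have hcompl_sub : Λ.carrierᶜ ⊆ Set.Iio c := by
    intro n hn
    by_contra h
    exact hn (aux_conductor_mem Λ n (by simpa [Set.mem_Iio] using h))
  set A := Λ.carrier ∩ Set.Iio c with hA
  have hAfin : A.Finite := (Set.finite_Iio c).subset (Set.inter_subset_right)
  have hdisj : Disjoint A Λ.carrierᶜ := by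
    apply Set.disjoint_left.mpr
    intro n hn hn'
    exact hn' hn.1
  have hunion : A ∪ Λ.carrierᶜ = Set.Iio c := by
    ext n
    simp only [Set.mem_union, hA, Set.mem_inter_iff, Set.mem_Iio, Set.mem_compl_iff]
    constructor
    · rintro (⟨_, h⟩ | h)
      · exact h
      · exact hcompl_sub h
    · intro h
      by_cases hn : n ∈ Λ.carrier
      · exact Or.inl ⟨hn, h⟩
      · exact Or.inr hn
  have hIio : (Set.Iio c).ncard = c := by
    simp [Set.ncard_eq_toFinset_card', Set.toFinset_Iio]
  have hcard : A.ncard + Λ.genus = c := by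
    have := Set.ncard_union_eq hdisj hAfin Λ.finite_compl
    rw [hunion, hIio] at this
    unfold NumericalSemigroup.genus
    omega
  have hAcard : A.ncard = Λ.genus := by omega
  -- the reflection map
  set φ : ℕ → ℕ := fun n => c - 1 - n with hφ
  have hinj : Set.InjOn φ A := by
    intro a ha b hb hab
    have ha' : a < c := ha.2
    have hb' : b < c := hb.2
    simp only [hφ] at hab
    omega
  have himg : φ '' A ⊆ Λ.carrierᶜ := by
    rintro _ ⟨n, hn, rfl⟩
    intro hmem
    have hn' : n < c := hn.2
    have : n + (c - 1 - n) = c - 1 := by omega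
    exact hF (this ▸ Λ.add_mem hn.1 hmem)
  have hcard2 : (φ '' A).ncard = Λ.genus := by
    rw [Set.ncard_image_of_injOn hinj, hAcard]
  have heq : φ '' A = Λ.carrierᶜ := by
    apply Set.eq_of_subset_of_ncard_le himg _ Λ.finite_compl
    rw [hcard2]
    exact le_of_eq rfl
  have : t ∈ φ '' A := heq ▸ ht
  obtain ⟨n, hn, hnt⟩ := this
  have hn' : n < c := hn.2
  have : c - 1 - t = n := by simp only [hφ] at hnt; omega
  rw [this]
  exact hn.1

theorem stmt4 (Λ : NumericalSemigroup) :
    (Λ.IsArf ∧ Λ.conductor = 2 * Λ.genus) ↔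
      ∃ m : ℕ, Odd m ∧ Λ.carrier = {n : ℕ | ∃ a b : ℕ, n = 2 * a + m * b} := by
  constructor
  · rintro ⟨harf, hsym⟩
    have harf' := aux_arf_elem Λ harf
    by_cases h1 : 1 ∈ Λ.carrier
    · -- carrier = ℕ, take m = 1
      refine ⟨1, odd_one, ?_⟩
      have huniv : ∀ n, n ∈ Λ.carrier := by
        intro n
        induction n with
        | zero => exact Λ.zero_mem
        | succ k ih => exact Λ.add_mem ih h1
      ext n
      simp only [Set.mem_setOf_eq]
      exact ⟨fun _ => ⟨0, n, by ring⟩, fun _ => huniv n⟩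
    · set c := Λ.conductor with hcdef
      have hc2 : 2 ≤ c := by
        by_contra h
        exact h1 (aux_conductor_mem Λ 1 (by omega))
      have hF : c - 1 ∉ Λ.carrier := aux_frob_not_mem Λ (by omega)
      -- 2 ∈ carrier
      have h2 : 2 ∈ Λ.carrier := by
        by_cases hc3 : c = 2
        · exact aux_conductor_mem Λ 2 (by omega)
        · by_contra h2
          have hF1 : c - 1 - 1 ∈ Λ.carrier := aux_symm_gap Λ hsym h1
          have hF2 : c - 1 - 2 ∈ Λ.carrier := aux_symm_gap Λ hsym h2
          have := harf' (c - 1 - 1) hF1 (c - 1 - 1) hF1 (c - 1 - 2) hF2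
            (by omega) (le_refl _)
          have heq : (c - 1 - 1) + (c - 1 - 1) - (c - 1 - 2) = c - 1 := by omega
          rw [heq] at this
          exact hF this
      have heven : ∀ k : ℕ, 2 * k ∈ Λ.carrier := by
        intro k
        induction k with
        | zero => exact Λ.zero_mem
        | succ j ih =>
          have : 2 * (j + 1) = 2 * j + 2 := by ring
          rw [this]
          exact Λ.add_mem ih h2
      have hFodd : (c - 1) % 2 = 1 := by
        rcases Nat.even_or_odd (c - 1) with ⟨j, hj⟩ | hodd
        · exact absurd (by rw [hj]; have := heven j; rwa [two_mul] at this) hF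
        · exact Nat.odd_iff.mp hodd
      refine ⟨c + 1, Nat.odd_iff.mpr (by omega), ?_⟩
      ext n
      rw [Set.mem_setOf_eq, aux_gen2m (Nat.odd_iff.mpr (by omega))]
      constructor
      · intro hn
        rcases Nat.even_or_odd n with he | ho
        · exact Or.inl (Nat.even_iff.mp he)
        · right
          have hno : n % 2 = 1 := Nat.odd_iff.mp ho
          by_contra hlt
          -- n odd, n ≤ c, n ∈ carrier; n ≠ c-1 (c-1 ∉ carrier), n ≠ c (c even)
          have hnle : n ≤ c - 2 := by
            have hnc : n ≠ c := by intro h; omega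
            have hnF : n ≠ c - 1 := by intro h; exact hF (h ▸ hn)
            omega
          -- c - 1 - n is even and positive
          have : c - 1 - n = 2 * ((c - 1 - n) / 2) := by omega
          have hmem : c - 1 - n ∈ Λ.carrier := this ▸ heven _
          have hsum : n + (c - 1 - n) = c - 1 := by omega
          exact hF (hsum ▸ Λ.add_mem hn hmem)
      · rintro (he | hge)
        · have : n = 2 * (n / 2) := by omega
          exact this ▸ heven _
        · exact aux_conductor_mem Λ n (by omega)
  · rintro ⟨m, hm, hcar⟩
    have hm' : m % 2 = 1 := Nat.odd_iff.mp hm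
    have hmem : ∀ n, n ∈ Λ.carrier ↔ (n % 2 = 0 ∨ m ≤ n) := by
      intro n
      rw [hcar, Set.mem_setOf_eq, aux_gen2m hm]
    -- conductor = m - 1
    have hcond : Λ.conductor = m - 1 := by
      apply le_antisymm
      · apply Nat.sInf_le
        intro n hn
        rw [hmem]
        omega
      · refine le_csInf ⟨m, fun n hn => (hmem n).mpr (Or.inr hn)⟩ ?_
        intro b hb
        by_contra h
        have : m - 2 ∈ Λ.carrier := hb (m - 2) (by omega)
        rw [hmem] at this
        omega
    -- genus = (m-1)/2
    set t := (m - 1) / 2 with ht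
    have hgen : Λ.genus = t := by
      unfold NumericalSemigroup.genus
      have : Λ.carrierᶜ = (fun k => 2 * k + 1) '' Set.Iio t := by
        ext n
        simp only [Set.mem_compl_iff, hmem, Set.mem_image, Set.mem_Iio]
        constructor
        · intro h
          exact ⟨n / 2, by omega, by omega⟩
        · rintro ⟨k, hk, rfl⟩
          omega
      rw [this, Set.ncard_image_of_injective _ (fun a b h => by omega)]
      simp [Set.ncard_eq_toFinset_card', Set.toFinset_Iio]
    constructor
    · -- Arf
      intro f ⟨hmono, hrange⟩ i j k hkj hji
      have hmemf : ∀ l, f l ∈ Λ.carrier := fun l => hrange ▸ Set.mem_range_self l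
      have hi := (hmem (f i)).mp (hmemf i)
      have hj := (hmem (f j)).mp (hmemf j)
      have hk := (hmem (f k)).mp (hmemf k)
      have h1 : f k ≤ f j := hmono.le_iff_le.mpr hkj
      have h2 : f j ≤ f i := hmono.le_iff_le.mpr hji
      rw [hmem]
      omega
    · rw [hcond, hgen]
      omega
end

section
/- The only numerical semigroups that are both Arf and pseudo-symmetric are {0,3,4,5,6,…} and {0,3,5,6,7,…}. -/
namespace NumericalSemigroup

lemma mul_mem (Λ : NumericalSemigroup) {m : ℕ} (hm : m ∈ Λ.carrier) :
    ∀ k : ℕ, k * m ∈ Λ.carrier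
  | 0 => by simpa using Λ.zero_mem
  | k + 1 => by
      have := Λ.add_mem (Λ.mul_mem hm k) hm
      simpa [add_mul] using this

lemma conductor_spec (Λ : NumericalSemigroup) :
    ∀ n, Λ.conductor ≤ n → n ∈ Λ.carrier := by
  have hne : {c : ℕ | ∀ n, c ≤ n → n ∈ Λ.carrier}.Nonempty := by
    obtain ⟨N, hN⟩ := Λ.finite_compl.bddAbove
    refine ⟨N + 1, fun n hn => ?_⟩
    by_contra h
    exact absurd (hN h) (by omega)
  exact Nat.sInf_mem hne

lemma conductor_pred (Λ : NumericalSemigroup) (h : Λ.conductor ≠ 0) :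
    Λ.conductor - 1 ∉ Λ.carrier := by
  intro hmem
  have : Λ.conductor ≤ Λ.conductor - 1 := by
    apply Nat.sInf_le
    intro n hn
    rcases eq_or_lt_of_le hn with h1 | h1
    · exact h1 ▸ hmem
    · exact Λ.conductor_spec n (by omega)
  omega

lemma carrier_infinite (Λ : NumericalSemigroup) : Λ.carrier.Infinite := by
  have := Λ.finite_compl.infinite_compl (α := ℕ)
  simpa using this

lemma arf_elem (Λ : NumericalSemigroup) (hA : Λ.IsArf) {s t u : ℕ}
    (hs : s ∈ Λ.carrier) (ht : t ∈ Λ.carrier) (hu : u ∈ Λ.carrier)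
    (hut : u ≤ t) (hts : t ≤ s) : s + t - u ∈ Λ.carrier := by
  have hinf : {n | n ∈ Λ.carrier}.Infinite := Λ.carrier_infinite
  set f := Nat.nth (· ∈ Λ.carrier) with hf
  have hmono : StrictMono f := Nat.nth_strictMono hinf
  have hrange : Set.range f = Λ.carrier := Nat.range_nth_of_infinite hinf
  obtain ⟨i, hi⟩ : ∃ i, f i = s := Set.mem_range.mp (by rw [hrange]; exact hs)
  obtain ⟨j, hj⟩ : ∃ j, f j = t := Set.mem_range.mp (by rw [hrange]; exact ht)
  obtain ⟨k, hk⟩ : ∃ k, f k = u := Set.mem_range.mp (by rw [hrange]; exact hu)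
  have hkj : k ≤ j := by
    by_contra h
    have := hmono (lt_of_not_ge h)
    omega
  have hji : j ≤ i := by
    by_contra h
    have := hmono (lt_of_not_ge h)
    omega
  have := hA f ⟨hmono, hrange⟩ i j k hkj hji
  rwa [hi, hj, hk] at this

end NumericalSemigroup

theorem stmt6 (Λ : NumericalSemigroup) :
    (Λ.IsArf ∧ Λ.conductor + 1 = 2 * Λ.genus) ↔
      (Λ.carrier = insert 0 (Set.Ici 3) ∨
        Λ.carrier = insert 0 (insert 3 (Set.Ici 5))) := by
  constructor
  · rintro ⟨hArf, hps⟩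
    classical
    set c := Λ.conductor with hcdef
    have hcspec := Λ.conductor_spec
    -- c ≠ 0
    have hc0 : c ≠ 0 := by
      intro h
      have : Λ.carrier = Set.univ := by
        ext n; simp [hcspec n (by omega)]
      have : Λ.genus = 0 := by
        simp [NumericalSemigroup.genus, this]
      omega
    have hcpred : c - 1 ∉ Λ.carrier := Λ.conductor_pred hc0
    -- parity: c odd
    have hg : 2 * Λ.genus = c + 1 := hps.symm
    set g := Λ.genus with hgdef
    have hcodd : c = 2 * g - 1 := by omega
    set h := g - 1 with hhdef
    have hg1 : 1 ≤ g := by omega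
    have hch : c = 2 * h + 1 := by omega
    have hhnot : h ∉ Λ.carrier := by
      intro hmem
      have := Λ.add_mem hmem hmem
      have : c - 1 ∈ Λ.carrier := by
        have : h + h = c - 1 := by omega
        rwa [this] at ‹h + h ∈ Λ.carrier›
      exact hcpred this
    have hh1 : 1 ≤ h := by
      rcases Nat.eq_zero_or_pos h with h0 | h0
      · exact absurd (h0 ▸ Λ.zero_mem) hhnot
      · exact h0
    have hc3 : 3 ≤ c := by omega
    -- gaps as a finset
    have hgapslt : ∀ n, n ∉ Λ.carrier → n < c := by
      intro n hn
      by_contra hge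
      exact hn (hcspec n (by omega))
    set G : Finset ℕ := (Finset.range c).filter (fun n => n ∉ Λ.carrier) with hGdef
    have hGcard : G.card = g := by
      have hset : Λ.carrierᶜ = ↑G := by
        ext n
        simp only [hGdef, Finset.coe_filter, Finset.mem_range, Set.mem_setOf_eq,
          Set.mem_compl_iff]
        exact ⟨fun hn => ⟨hgapslt n hn, hn⟩, fun hn => hn.2⟩
      rw [hgdef, NumericalSemigroup.genus, hset, Set.ncard_coe_finset]
    set A : Finset ℕ := (Finset.range c).filter (fun n => n ∈ Λ.carrier) with hAdef
    have hAG : A.card + G.card = c := by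
      rw [hAdef, hGdef]
      rw [Finset.card_filter_add_card_filter_not]
      · exact Finset.card_range c
    -- key pseudo-symmetry lemma
    have hkey : ∀ x, x < c → x ≠ h → x ∉ Λ.carrier → c - 1 - x ∈ Λ.carrier := by
      intro x hxc hxh hxn
      by_contra hyn
      set y := c - 1 - x with hydef
      have hxy : x ≠ y := by omega
      have hyh : y ≠ h := by omega
      have hyc : y < c := by omega
      -- the map a ↦ c - 1 - a sends A into G \ {x, y, h}
      have himg : A.image (fun a => c - 1 - a) ⊆ G \ {x, y, h} := by
        intro b hb
        simp only [Finset.mem_image] at hb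
        obtain ⟨a, ha, hab⟩ := hb
        simp only [hAdef, Finset.mem_filter, Finset.mem_range] at ha
        obtain ⟨hac, hamem⟩ := ha
        have hbn : b ∉ Λ.carrier := by
          intro hbmem
          have := Λ.add_mem hamem hbmem
          have : c - 1 ∈ Λ.carrier := by
            have : a + b = c - 1 := by omega
            rwa [this] at ‹a + b ∈ Λ.carrier›
          exact hcpred this
        simp only [Finset.mem_sdiff, hGdef, Finset.mem_filter, Finset.mem_range,
          Finset.mem_insert, Finset.mem_singleton]
        refine ⟨⟨by omega, hbn⟩, ?_⟩
        push_neg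
        refine ⟨?_, ?_, ?_⟩
        · intro hbx
          have : a = y := by omega
          exact hyn (this ▸ hamem)
        · intro hby
          have : a = x := by omega
          exact hxn (this ▸ hamem)
        · intro hbh
          have : a = h := by omega
          exact hhnot (this ▸ hamem)
      have hinj : Set.InjOn (fun a => c - 1 - a) ↑A := by
        intro a ha b hb hab
        simp only [hAdef, Finset.coe_filter, Set.mem_setOf_eq, Finset.mem_range] at ha hb
        simp only at hab
        omega
      have hcardA : (A.image (fun a => c - 1 - a)).card = A.card :=
        Finset.card_image_of_injOn hinj
      have hsub : ({x, y, h} : Finset ℕ) ⊆ G := by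
        intro z hz
        simp only [Finset.mem_insert, Finset.mem_singleton] at hz
        simp only [hGdef, Finset.mem_filter, Finset.mem_range]
        rcases hz with rfl | rfl | rfl
        · exact ⟨hxc, hxn⟩
        · exact ⟨hyc, hyn⟩
        · exact ⟨by omega, hhnot⟩
      have hthree : ({x, y, h} : Finset ℕ).card = 3 := by
        rw [Finset.card_insert_of_notMem (by simp [hxy, hxh]),
          Finset.card_insert_of_notMem (by simp [hyh]), Finset.card_singleton]
      have hGle : ({x, y, h} : Finset ℕ).card ≤ G.card := Finset.card_le_card hsub
      have hle : A.card ≤ (G \ {x, y, h}).card := by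
        rw [← hcardA]
        exact Finset.card_le_card himg
      rw [Finset.card_sdiff_of_subset hsub, hthree] at hle
      omega
    -- 1 ∉ Λ
    have h1n : 1 ∉ Λ.carrier := by
      intro hmem
      have := Λ.mul_mem hmem (c - 1)
      rw [mul_one] at this
      exact hcpred this
    -- 2 ∉ Λ
    have h2n : 2 ∉ Λ.carrier := by
      intro hmem
      have := Λ.mul_mem hmem h
      have : c - 1 ∈ Λ.carrier := by
        have heq : h * 2 = c - 1 := by omega
        rwa [heq] at ‹h * 2 ∈ Λ.carrier›
      exact hcpred this
    -- h ≤ 2 via Arf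
    have hhle : h ≤ 2 := by
      by_contra hgt
      push_neg at hgt
      have hc2 : c - 2 ∈ Λ.carrier := by
        have := hkey 1 (by omega) (by omega) h1n
        have heq : c - 1 - 1 = c - 2 := by omega
        rwa [heq] at this
      have hc3' : c - 3 ∈ Λ.carrier := by
        have := hkey 2 (by omega) (by omega) h2n
        have heq : c - 1 - 2 = c - 3 := by omega
        rwa [heq] at this
      have := Λ.arf_elem hArf hc2 hc2 hc3' (by omega) (le_refl _)
      have heq : c - 2 + (c - 2) - (c - 3) = c - 1 := by omega
      rw [heq] at this
      exact hcpred this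
    interval_cases h
    · -- c = 3
      left
      ext n
      simp only [Set.mem_insert_iff, Set.mem_Ici]
      constructor
      · intro hn
        by_contra hcon
        push_neg at hcon
        obtain ⟨h0, h3⟩ := hcon
        have : n = 1 ∨ n = 2 := by omega
        rcases this with rfl | rfl
        · exact h1n hn
        · exact hcpred (by simpa [show c - 1 = 2 by omega] using hn)
      · rintro (rfl | hn)
        · exact Λ.zero_mem
        · exact hcspec n (by omega)
    · -- c = 5
      right
      have h3m : 3 ∈ Λ.carrier := by
        have := hkey 1 (by omega) (by omega) h1n
        simpa [show c - 1 - 1 = 3 by omega] using this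
      have h4n : 4 ∉ Λ.carrier := by
        simpa [show c - 1 = 4 by omega] using hcpred
      ext n
      simp only [Set.mem_insert_iff, Set.mem_Ici]
      constructor
      · intro hn
        by_contra hcon
        push_neg at hcon
        obtain ⟨h0, h3, h5⟩ := hcon
        have : n = 1 ∨ n = 2 ∨ n = 4 := by omega
        rcases this with rfl | rfl | rfl
        · exact h1n hn
        · exact h2n hn
        · exact h4n hn
      · rintro (rfl | rfl | hn)
        · exact Λ.zero_mem
        · exact h3m
        · exact hcspec n (by omega)
  · -- backward direction
    intro hcase
    rcases hcase with hcar | hcar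
    · constructor
      · intro f ⟨hmono, hrange⟩ i j k hkj hji
        have hmem : ∀ n, f n ∈ Λ.carrier := fun n => hrange ▸ Set.mem_range_self n
        have hfk : f k ≤ f j := hmono.monotone hkj
        have hfj : f j ≤ f i := hmono.monotone hji
        have hi := hmem i; have hj := hmem j; have hk := hmem k
        rw [hcar] at hi hj hk ⊢
        simp only [Set.mem_insert_iff, Set.mem_Ici] at hi hj hk ⊢
        omega
      · have hcompl : Λ.carrierᶜ = {1, 2} := by
          rw [hcar]; ext n
          simp only [Set.mem_compl_iff, Set.mem_insert_iff, Set.mem_Ici,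
            Set.mem_singleton_iff]
          omega
        have hgen : Λ.genus = 2 := by
          rw [NumericalSemigroup.genus, hcompl]
          rw [Set.ncard_pair (by norm_num)]
        have hcond : Λ.conductor = 3 := by
          have h3 : (3 : ℕ) ∈ {c : ℕ | ∀ n, c ≤ n → n ∈ Λ.carrier} := by
            intro n hn; rw [hcar]; right; exact hn
          have hle : Λ.conductor ≤ 3 := Nat.sInf_le h3
          have hge : 3 ≤ Λ.conductor := by
            by_contra hlt
            push_neg at hlt
            have h2 : (2 : ℕ) ∈ Λ.carrier := Λ.conductor_spec 2 (by omega)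
            rw [hcar] at h2
            simp only [Set.mem_insert_iff, Set.mem_Ici] at h2
            omega
          omega
        rw [hcond, hgen]
    · constructor
      · intro f ⟨hmono, hrange⟩ i j k hkj hji
        have hmem : ∀ n, f n ∈ Λ.carrier := fun n => hrange ▸ Set.mem_range_self n
        have hfk : f k ≤ f j := hmono.monotone hkj
        have hfj : f j ≤ f i := hmono.monotone hji
        have hi := hmem i; have hj := hmem j; have hk := hmem k
        rw [hcar] at hi hj hk ⊢
        simp only [Set.mem_insert_iff, Set.mem_Ici] at hi hj hk ⊢
        omega
      · have hcompl : Λ.carrierᶜ = {1, 2, 4} := by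
          rw [hcar]; ext n
          simp only [Set.mem_compl_iff, Set.mem_insert_iff, Set.mem_Ici,
            Set.mem_singleton_iff]
          omega
        have hgen : Λ.genus = 3 := by
          rw [NumericalSemigroup.genus, hcompl]
          rw [Set.ncard_insert_of_notMem (by norm_num) (Set.toFinite _),
            Set.ncard_pair (by norm_num)]
        have hcond : Λ.conductor = 5 := by
          have h5 : (5 : ℕ) ∈ {c : ℕ | ∀ n, c ≤ n → n ∈ Λ.carrier} := by
            intro n hn; rw [hcar]; right; right; exact hn
          have hle : Λ.conductor ≤ 5 := Nat.sInf_le h5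
          have hge : 5 ≤ Λ.conductor := by
            by_contra hlt
            push_neg at hlt
            have h4 : (4 : ℕ) ∈ Λ.carrier := Λ.conductor_spec 4 (by omega)
            rw [hcar] at h4
            simp only [Set.mem_insert_iff, Set.mem_Ici] at h4
            omega
          omega
        rw [hcond, hgen]
end

section
/- A numerical semigroup Λ with enumeration λ is Arf if and only if for all indices i ≥ j ≥ 0, the element 2λ_i - λ_j belongs to Λ. -/
lemma key_aux (S : NumericalSemigroup)
    (h : ∀ x ∈ S.carrier, ∀ y ∈ S.carrier, y ≤ x → 2 * x - y ∈ S.carrier) :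
    ∀ m x y z, x ∈ S.carrier → y ∈ S.carrier → z ∈ S.carrier → z ≤ y → y ≤ x →
      (x - z) + (y - z) ≤ m → x + y - z ∈ S.carrier := by
  intro m
  induction m with
  | zero =>
    intro x y z hx hy hz hzy hyx hm
    have : x + y - z = x := by omega
    rwa [this]
  | succ n ih =>
    intro x y z hx hy hz hzy hyx hm
    by_cases hyz : y = z
    · have : x + y - z = x := by omega
      rwa [this]
    · have hb : 2 * y - z ∈ S.carrier := h y hy z hz hzy
      rcases le_total x (2 * y - z) with hxb | hbx
      · have := ih (2 * y - z) x y hb hx hy hyx hxb (by omega)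
        have e : 2 * y - z + x - y = x + y - z := by omega
        rwa [e] at this
      · have := ih x (2 * y - z) y hx hb hy (by omega) hbx (by omega)
        have e : x + (2 * y - z) - y = x + y - z := by omega
        rwa [e] at this

theorem stmt7 (Λ : NumericalSemigroup) (f : ℕ → ℕ) (hf : Λ.IsEnum f) :
    Λ.IsArf ↔ ∀ i j : ℕ, j ≤ i → 2 * f i - f j ∈ Λ.carrier := by
  constructor
  · intro hA i j hij
    have := hA f hf i i j hij le_rfl
    have e : f i + f i - f j = 2 * f i - f j := by omega
    rwa [e] at this
  · intro h g hg i j k hkj hji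
    -- element-wise hypothesis
    have helt : ∀ x ∈ Λ.carrier, ∀ y ∈ Λ.carrier, y ≤ x → 2 * x - y ∈ Λ.carrier := by
      intro x hx y hy hyx
      rw [← hf.2] at hx hy
      obtain ⟨i', rfl⟩ := hx
      obtain ⟨j', rfl⟩ := hy
      exact h i' j' (hf.1.le_iff_le.mp hyx)
    have hgi : g i ∈ Λ.carrier := hg.2 ▸ Set.mem_range_self i
    have hgj : g j ∈ Λ.carrier := hg.2 ▸ Set.mem_range_self j
    have hgk : g k ∈ Λ.carrier := hg.2 ▸ Set.mem_range_self k
    exact key_aux Λ helt ((g i - g k) + (g j - g k)) (g i) (g j) (g k)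
      hgi hgj hgk (hg.1.monotone hkj) (hg.1.monotone hji) le_rfl
end

section
/- The numerical semigroup generated by the interval {i, i+1, …, j} (with i ≤ j and gcd conditions ensuring finite complement) equals the union over k ≥ 0 of the intervals {k·i, k·i + 1, …, k·j}. -/
/-- The set of all `ℕ`-linear combinations of the integers in `{i, i+1, …, j}`. -/
noncomputable def intervalGen (i j : ℕ) : Set ℕ :=
  {n : ℕ | ∃ m : ℕ → ℕ, n = ∑ t ∈ Finset.Icc i j, m t * t}

lemma gen_single (i j t : ℕ) (ht : t ∈ Finset.Icc i j) : t ∈ intervalGen i j := by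
  refine ⟨fun s => if s = t then 1 else 0, ?_⟩
  simp only [ite_mul, one_mul, zero_mul]
  rw [Finset.sum_ite_eq' (Finset.Icc i j) t (fun x => x), if_pos ht]

lemma gen_add (i j a b : ℕ) (ha : a ∈ intervalGen i j) (hb : b ∈ intervalGen i j) :
    a + b ∈ intervalGen i j := by
  obtain ⟨m1, h1⟩ := ha; obtain ⟨m2, h2⟩ := hb
  exact ⟨fun t => m1 t + m2 t, by simp [h1, h2, add_mul, Finset.sum_add_distrib]⟩

lemma gen_smul (i j c a : ℕ) (ha : a ∈ intervalGen i j) : c * a ∈ intervalGen i j := by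
  obtain ⟨m, h⟩ := ha
  exact ⟨fun t => c * m t, by simp [h, Finset.mul_sum, mul_assoc]⟩

theorem stmt9 (i j : ℕ) (hi : 0 < i) (hij : i ≤ j) :
    intervalGen i j = ⋃ k : ℕ, Set.Icc (k * i) (k * j) := by
  obtain ⟨d, rfl⟩ : ∃ d, j = i + d := ⟨j - i, by omega⟩
  ext n
  simp only [Set.mem_iUnion, Set.mem_Icc]
  constructor
  · rintro ⟨m, rfl⟩
    refine ⟨∑ t ∈ Finset.Icc i (i + d), m t, ?_, ?_⟩
    · rw [Finset.sum_mul]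
      exact Finset.sum_le_sum fun t ht => Nat.mul_le_mul_left _ (Finset.mem_Icc.mp ht).1
    · rw [Finset.sum_mul]
      exact Finset.sum_le_sum fun t ht => Nat.mul_le_mul_left _ (Finset.mem_Icc.mp ht).2
  · rintro ⟨k, h1, h2⟩
    rcases Nat.eq_zero_or_pos d with rfl | hdpos
    · have hki : k * (i + 0) = k * i := by ring
      have : n = k * i := by omega
      subst this
      exact gen_smul _ _ k i (gen_single _ _ i (by simp))
    · set r := n - k * i with hrdef
      have hkj : k * (i + d) = k * i + k * d := Nat.mul_add k i d
      have hr : n = k * i + r := by omega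
      have hrle : r ≤ k * d := by omega
      set q := r / d with hq
      set s := r % d with hs
      have hqs : q * d + s = r := by rw [mul_comm]; exact Nat.div_add_mod r d
      have hsd : s < d := Nat.mod_lt _ hdpos
      have hqk : q ≤ k := Nat.le_of_mul_le_mul_right (by omega) hdpos
      rcases Nat.eq_zero_or_pos s with hs0 | hspos
      · have h3 : q * (i + d) = q * i + q * d := Nat.mul_add q i d
        have h4 : (k - q) * i + q * i = k * i := by
          rw [← Nat.add_mul, Nat.sub_add_cancel hqk]
        have key : n = (k - q) * i + q * (i + d) := by omega
        rw [key]
        exact gen_add _ _ _ _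
          (gen_smul _ _ _ i (gen_single _ _ i (by simp)))
          (gen_smul _ _ _ (i + d) (gen_single _ _ (i + d) (by simp)))
      · have hqk' : q < k := by
          rcases Nat.lt_or_ge q k with h | h
          · exact h
          · have hq' : q = k := le_antisymm hqk h
            rw [hq'] at hqs
            omega
        have h3 : q * (i + d) = q * i + q * d := Nat.mul_add q i d
        have h4 : (k - q - 1) * i + i + q * i = k * i := by
          rw [← Nat.succ_mul, ← Nat.add_mul]
          congr 1
          omega
        have key : n = (k - q - 1) * i + (i + s) + q * (i + d) := by omega
        rw [key]
        refine gen_add _ _ _ _ (gen_add _ _ _ _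
          (gen_smul _ _ _ i (gen_single _ _ i (by simp)))
          (gen_single _ _ (i + s) (by simp; omega)))
          (gen_smul _ _ _ (i + d) (gen_single _ _ (i + d) (by simp)))
end

section
/- The only numerical semigroups that are Arf and generated by an interval are the ordinary semigroups {0} ∪ {n ∈ ℕ : n ≥ c} for some nonnegative integer c. -/
/-! If `Λ` is generated by the interval `{i, …, j}`, the sums of exactly `k` generators fill
`[k * i, k * j]`, so `Λ` is ordinary with conductor `i` as soon as consecutive such intervals
overlap, i.e. `2 * i ≤ j + 1`. For `i < j`, the Arf property applied to `i ≤ i + 1 ≤ j` puts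
`j + 1` in `Λ`, which forces exactly this inequality; for `i = j` the semigroup is `i ℕ`, which
has finitely many gaps only if `i = 1`. Conversely, `{0} ∪ [c, ∞)` is generated by
`{c, …, 2 * c - 1}` and is clearly Arf. -/

namespace NumericalSemigroup

theorem exists_mem_and_succ_mem (Λ : NumericalSemigroup) :
    ∃ n, n ∈ Λ.carrier ∧ n + 1 ∈ Λ.carrier := by
  obtain ⟨M, hM⟩ := Λ.finite_compl.bddAbove
  have mem_of_lt {n : ℕ} (hn : M < n) : n ∈ Λ.carrier := by
    by_contra h
    exact not_le.mpr hn (hM h)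
  exact ⟨M + 1, mem_of_lt (by omega), mem_of_lt (by omega)⟩

theorem isEnum_nth (Λ : NumericalSemigroup) : Λ.IsEnum (Nat.nth (· ∈ Λ.carrier)) := by
  have hinf : Λ.carrier.Infinite := fun h => Set.infinite_univ (by simpa using h.union Λ.finite_compl)
  exact ⟨Nat.nth_strictMono hinf, Nat.range_nth_of_infinite hinf⟩

theorem IsArf.add_sub_mem {Λ : NumericalSemigroup} (hΛ : Λ.IsArf) {a b c : ℕ}
    (ha : a ∈ Λ.carrier) (hb : b ∈ Λ.carrier) (hc : c ∈ Λ.carrier) (hab : a ≤ b) (hbc : b ≤ c) :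
    c + b - a ∈ Λ.carrier := by
  obtain ⟨hmono, hrange⟩ := Λ.isEnum_nth
  obtain ⟨k, rfl⟩ : a ∈ Set.range (Nat.nth (· ∈ Λ.carrier)) := by rwa [hrange]
  obtain ⟨j, rfl⟩ : b ∈ Set.range (Nat.nth (· ∈ Λ.carrier)) := by rwa [hrange]
  obtain ⟨i, rfl⟩ : c ∈ Set.range (Nat.nth (· ∈ Λ.carrier)) := by rwa [hrange]
  exact hΛ _ ⟨hmono, hrange⟩ i j k (hmono.le_iff_le.mp hab) (hmono.le_iff_le.mp hbc)

theorem isArf_of_carrier_eq_insert_zero_Ici {Λ : NumericalSemigroup} {c : ℕ}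
    (hΛ : Λ.carrier = insert 0 (Set.Ici c)) : Λ.IsArf := by
  intro f ⟨hmono, hrange⟩ i j k hkj hji
  have hfkj : f k ≤ f j := hmono.monotone hkj
  have hfji : f j ≤ f i := hmono.monotone hji
  have hfi : f i ∈ Λ.carrier := hrange ▸ Set.mem_range_self i
  have hfj : f j ∈ Λ.carrier := hrange ▸ Set.mem_range_self j
  rw [hΛ] at hfi hfj ⊢
  rcases hfj with hfj | hfj
  · rwa [show f i + f j - f k = f i by omega]
  · exact Or.inr (by simp only [Set.mem_Ici] at hfj ⊢; omega)

end NumericalSemigroup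

theorem zero_mem_intervalGen (i j : ℕ) : 0 ∈ intervalGen i j := ⟨fun _ => 0, by simp⟩

theorem mem_intervalGen_of_mem_Icc {i j t : ℕ} (ht : t ∈ Set.Icc i j) : t ∈ intervalGen i j := by
  refine ⟨Pi.single t 1, ?_⟩
  rw [Finset.sum_eq_single_of_mem t (by simpa using ht) fun s _ hs => by simp [hs]]
  simp

theorem add_mem_intervalGen {i j a b : ℕ} (ha : a ∈ intervalGen i j) (hb : b ∈ intervalGen i j) :
    a + b ∈ intervalGen i j := by
  obtain ⟨m, rfl⟩ := ha
  obtain ⟨m', rfl⟩ := hb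
  exact ⟨m + m', by simp [add_mul, Finset.sum_add_distrib]⟩

theorem mem_intervalGen_of_le_of_le {i j : ℕ} (hij : i ≤ j) :
    ∀ {k n : ℕ}, k * i ≤ n → n ≤ k * j → n ∈ intervalGen i j := by
  intro k
  induction k with
  | zero =>
    intro n _ hn
    rw [show n = 0 by simpa using hn]
    exact zero_mem_intervalGen i j
  | succ k ih =>
    intro n hlo hhi
    rw [add_one_mul] at hlo hhi
    have hkij : k * i ≤ k * j := Nat.mul_le_mul_left k hij
    -- Peel off one generator `t ≥ n - k * j`, so that `n - t` lies in `[k * i, k * j]`.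
    obtain ⟨t, hit, htj, hlo', hhi', htn⟩ :
        ∃ t, i ≤ t ∧ t ≤ j ∧ k * i ≤ n - t ∧ n - t ≤ k * j ∧ t ≤ n :=
      ⟨max i (n - k * j), by omega, by omega, by omega, by omega, by omega⟩
    simpa [Nat.sub_add_cancel htn] using
      add_mem_intervalGen (ih hlo' hhi') (mem_intervalGen_of_mem_Icc ⟨hit, htj⟩)

theorem exists_le_of_mem_intervalGen {i j n : ℕ} (hn : n ∈ intervalGen i j) :
    ∃ k, k * i ≤ n ∧ n ≤ k * j := by
  obtain ⟨m, rfl⟩ := hn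
  refine ⟨∑ t ∈ Finset.Icc i j, m t, ?_, ?_⟩ <;> rw [Finset.sum_mul]
  · exact Finset.sum_le_sum fun t ht => Nat.mul_le_mul_left _ (Finset.mem_Icc.mp ht).1
  · exact Finset.sum_le_sum fun t ht => Nat.mul_le_mul_left _ (Finset.mem_Icc.mp ht).2

theorem mem_intervalGen_iff {i j n : ℕ} (hij : i ≤ j) :
    n ∈ intervalGen i j ↔ ∃ k, k * i ≤ n ∧ n ≤ k * j :=
  ⟨exists_le_of_mem_intervalGen, fun ⟨_, hlo, hhi⟩ => mem_intervalGen_of_le_of_le hij hlo hhi⟩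

theorem mem_intervalGen_self_iff {i n : ℕ} : n ∈ intervalGen i i ↔ i ∣ n := by
  rw [mem_intervalGen_iff le_rfl]
  constructor
  · rintro ⟨k, hlo, hhi⟩
    exact ⟨k, by rw [mul_comm]; omega⟩
  · rintro ⟨k, rfl⟩
    exact ⟨k, (mul_comm k i).le, (mul_comm i k).le⟩

theorem intervalGen_eq_insert_zero_Ici {i j : ℕ} (hi : 0 < i) (hj : 2 * i ≤ j + 1) :
    intervalGen i j = insert 0 (Set.Ici i) := by
  ext n
  rw [mem_intervalGen_iff (by omega), Set.mem_insert_iff, Set.mem_Ici]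
  constructor
  · rintro ⟨k, hlo, hhi⟩
    rcases Nat.eq_zero_or_pos k with rfl | hk
    · exact Or.inl (by simpa using hhi)
    · exact Or.inr (le_trans (Nat.le_mul_of_pos_left i hk) hlo)
  · rintro (rfl | hn)
    · exact ⟨0, by simp, by simp⟩
    · -- With `k = n / i` summands: `n < k * i + i ≤ k * (2 * i - 1) + 1 ≤ k * j + 1`.
      have hk : 1 ≤ n / i := (Nat.one_le_div_iff hi).mpr hn
      have hlt : n < n / i * i + i := Nat.lt_div_mul_add hi
      refine ⟨n / i, Nat.div_mul_le_self n i, ?_⟩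
      nlinarith

theorem two_mul_le_of_succ_mem_intervalGen {i j : ℕ} (h : j + 1 ∈ intervalGen i j) :
    2 * i ≤ j + 1 := by
  obtain ⟨k, hlo, hhi⟩ := exists_le_of_mem_intervalGen h
  have hk : 2 ≤ k := by
    by_contra! hk
    interval_cases k <;> omega
  exact le_trans (Nat.mul_le_mul_right i hk) hlo

theorem stmt10 (Λ : NumericalSemigroup) :
    (Λ.IsArf ∧ ∃ i j : ℕ, 0 < i ∧ i ≤ j ∧ Λ.carrier = intervalGen i j) ↔
      ∃ c : ℕ, Λ.carrier = insert 0 (Set.Ici c) := by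
  constructor
  · rintro ⟨hΛarf, i, j, hi, hij, hΛ⟩
    refine ⟨i, hΛ.trans (intervalGen_eq_insert_zero_Ici hi ?_)⟩
    rcases hij.eq_or_lt with rfl | hij
    · obtain ⟨n, hn, hn1⟩ := Λ.exists_mem_and_succ_mem
      rw [hΛ, mem_intervalGen_self_iff] at hn hn1
      have : i = 1 := Nat.dvd_one.mp ((Nat.dvd_add_right hn).mp hn1)
      omega
    · have mem {t : ℕ} (ht : t ∈ Set.Icc i j) : t ∈ Λ.carrier := hΛ ▸ mem_intervalGen_of_mem_Icc ht
      have hsucc := hΛarf.add_sub_mem (mem ⟨le_rfl, hij.le⟩) (mem ⟨i.le_succ, hij⟩)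
        (mem ⟨hij.le, le_rfl⟩) i.le_succ hij
      rw [show j + (i + 1) - i = j + 1 by omega, hΛ] at hsucc
      exact two_mul_le_of_succ_mem_intervalGen hsucc
  · rintro ⟨c, hΛ⟩
    refine ⟨NumericalSemigroup.isArf_of_carrier_eq_insert_zero_Ici hΛ, max c 1, 2 * max c 1 - 1,
      by omega, by omega, ?_⟩
    rw [hΛ, intervalGen_eq_insert_zero_Ici (by omega) (by omega)]
    ext n
    simp only [Set.mem_insert_iff, Set.mem_Ici]
    omega
end

section
/- Every symmetric numerical semigroup is acute. -/
namespace NumericalSemigroup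

/-- A numerical semigroup is ordinary if it is `{0} ∪ [c, ∞)` for some `c`. -/
noncomputable def IsOrdinary (Λ : NumericalSemigroup) : Prop :=
  ∃ c : ℕ, Λ.carrier = insert 0 (Set.Ici c)

/-- The dominant: the largest element of `Λ` smaller than the conductor. -/
noncomputable def dominant (Λ : NumericalSemigroup) : ℕ :=
  sSup {n : ℕ | n ∈ Λ.carrier ∧ n < Λ.conductor}

/-- The subconductor: the smallest element `m` of `Λ` with `[m, d] ⊆ Λ`. -/
noncomputable def subconductor (Λ : NumericalSemigroup) : ℕ :=
  sInf {m : ℕ | m ∈ Λ.carrier ∧ Set.Icc m Λ.dominant ⊆ Λ.carrier}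

/-- The subdominant: the largest element of `Λ` smaller than the subconductor. -/
noncomputable def subdominant (Λ : NumericalSemigroup) : ℕ :=
  sSup {n : ℕ | n ∈ Λ.carrier ∧ n < Λ.subconductor}

/-- Acute: ordinary, or `c - d ≤ c' - d'`. -/
noncomputable def IsAcute (Λ : NumericalSemigroup) : Prop :=
  Λ.IsOrdinary ∨ Λ.conductor - Λ.dominant ≤ Λ.subconductor - Λ.subdominant

end NumericalSemigroup

theorem stmt11 (Λ : NumericalSemigroup) (hsym : Λ.conductor = 2 * Λ.genus) :
    Λ.IsAcute := by
  classical
  set c := Λ.conductor with hc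
  -- the conductor set is nonempty
  obtain ⟨b, hb⟩ := Λ.finite_compl.bddAbove
  have hne : {m : ℕ | ∀ n, m ≤ n → n ∈ Λ.carrier}.Nonempty := by
    refine ⟨b + 1, fun n hn => ?_⟩
    by_contra h
    exact absurd (hb h) (by omega)
  have hcmem : ∀ n, c ≤ n → n ∈ Λ.carrier := Nat.sInf_mem hne
  have hlt : ∀ x, x ∉ Λ.carrier → x < c := by
    intro x hx
    by_contra h
    exact hx (hcmem x (by omega))
  -- case genus = 0
  by_cases hg0 : Λ.genus = 0
  · left
    refine ⟨0, ?_⟩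
    have : Λ.carrierᶜ = ∅ := by
      have := Λ.finite_compl
      rw [NumericalSemigroup.genus] at hg0
      exact (Set.ncard_eq_zero this).mp hg0
    have huniv : Λ.carrier = Set.univ := by
      rw [← Set.compl_empty_iff, this]
    ext n
    simp [huniv]
  -- now genus ≥ 1, so c ≥ 2
  have hg1 : 1 ≤ Λ.genus := Nat.one_le_iff_ne_zero.mpr hg0
  have hc2 : 2 ≤ c := by rw [hsym]; omega
  -- c - 1 is a gap
  have hc1 : c - 1 ∉ Λ.carrier := by
    intro h
    have : c - 1 ∈ {m : ℕ | ∀ n, m ≤ n → n ∈ Λ.carrier} := by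
      intro n hn
      rcases Nat.eq_or_lt_of_le hn with rfl | h2
      · exact h
      · exact hcmem n (by omega)
    have h2 : c ≤ c - 1 := Nat.sInf_le this
    omega
  -- 1 is a gap (otherwise the semigroup is ℕ, genus 0)
  have h1 : 1 ∉ Λ.carrier := by
    intro h
    have hall : ∀ n, n ∈ Λ.carrier := by
      intro n
      induction n with
      | zero => exact Λ.zero_mem
      | succ k ih => exact Λ.add_mem ih h
    have : Λ.carrierᶜ = ∅ := by
      ext x; simp [hall]
    rw [NumericalSemigroup.genus, this] at hg1
    simp at hg1
  -- counting argument: symmetry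
  set B : Finset ℕ := (Finset.range c).filter (fun n => n ∉ Λ.carrier) with hB
  set A : Finset ℕ := (Finset.range c).filter (fun n => n ∈ Λ.carrier) with hA
  have hBcompl : Λ.carrierᶜ = ↑B := by
    ext x
    simp only [hB, Finset.coe_filter, Finset.mem_range, Set.mem_setOf_eq,
      Set.mem_compl_iff]
    exact ⟨fun h => ⟨hlt x h, h⟩, fun h => h.2⟩
  have hBcard : B.card = Λ.genus := by
    rw [NumericalSemigroup.genus, hBcompl, Set.ncard_coe_finset]
  have hABcard : A.card + B.card = c := by
    rw [hA, hB]
    have := Finset.card_filter_add_card_filter_not (s := Finset.range c) (fun n => n ∈ Λ.carrier)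
    simpa using this
  have hAcard : A.card = B.card := by omega
  have himg : A.image (fun x => c - 1 - x) = B := by
    apply Finset.eq_of_subset_of_card_le
    · intro y hy
      simp only [Finset.mem_image] at hy
      obtain ⟨x, hx, rfl⟩ := hy
      simp only [hA, Finset.mem_filter, Finset.mem_range] at hx
      simp only [hB, Finset.mem_filter, Finset.mem_range]
      refine ⟨by omega, fun hmem => ?_⟩
      have hsum : x + (c - 1 - x) = c - 1 := by omega
      have hmem' := Λ.add_mem hx.2 hmem
      rw [hsum] at hmem'
      exact hc1 hmem'
    · rw [Finset.card_image_of_injOn, hAcard]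
      intro x hx y hy hxy
      simp only [hA, Finset.mem_filter, Finset.mem_range, Finset.mem_coe] at hx hy
      have hxy' : c - 1 - x = c - 1 - y := hxy
      omega
  -- hence c - 2 ∈ Λ
  have hcm2 : c - 2 ∈ Λ.carrier := by
    by_contra h
    have hmemB : c - 2 ∈ B := by
      simp only [hB, Finset.mem_filter, Finset.mem_range]
      exact ⟨by omega, h⟩
    rw [← himg] at hmemB
    simp only [Finset.mem_image] at hmemB
    obtain ⟨x, hx, hxeq⟩ := hmemB
    simp only [hA, Finset.mem_filter, Finset.mem_range] at hx
    have : x = 1 := by omega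
    exact h1 (this ▸ hx.2)
  -- dominant = c - 2
  have hdom : Λ.dominant = c - 2 := by
    rw [NumericalSemigroup.dominant]
    have hmem : c - 2 ∈ {n : ℕ | n ∈ Λ.carrier ∧ n < c} := ⟨hcm2, by omega⟩
    apply le_antisymm
    · apply csSup_le ⟨_, hmem⟩
      intro n hn
      have : n ≠ c - 1 := fun h => hc1 (h ▸ hn.1)
      have := hn.2
      omega
    · exact le_csSup ⟨c, fun n hn => le_of_lt hn.2⟩ hmem
  -- case c = 2 : ordinary
  by_cases hceq : c = 2
  · left
    refine ⟨2, ?_⟩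
    ext n
    simp only [Set.mem_insert_iff, Set.mem_Ici]
    constructor
    · intro hn
      by_contra h
      push_neg at h
      have : n = 1 := by omega
      exact h1 (this ▸ hn)
    · rintro (rfl | h)
      · exact Λ.zero_mem
      · exact hcmem n (by omega)
  -- case c ≥ 3 (in fact ≥ 4)
  right
  have hc3 : 3 ≤ c := by omega
  have hdmem : Λ.dominant ∈ {m : ℕ | m ∈ Λ.carrier ∧ Set.Icc m Λ.dominant ⊆ Λ.carrier} := by
    refine ⟨hdom ▸ hcm2, fun x hx => ?_⟩
    simp only [Set.mem_Icc] at hx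
    have : x = Λ.dominant := le_antisymm hx.2 hx.1
    exact this ▸ (hdom ▸ hcm2)
  have hc'mem : Λ.subconductor ∈ {m : ℕ | m ∈ Λ.carrier ∧ Set.Icc m Λ.dominant ⊆ Λ.carrier} :=
    Nat.sInf_mem ⟨_, hdmem⟩
  have hc'2 : 2 ≤ Λ.subconductor := by
    by_contra h
    push_neg at h
    rcases (by omega : Λ.subconductor = 0 ∨ Λ.subconductor = 1) with h0 | h0
    · have hmem1 : (1 : ℕ) ∈ Set.Icc Λ.subconductor Λ.dominant :=
        Set.mem_Icc.mpr ⟨by omega, by rw [hdom]; omega⟩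
      exact h1 (hc'mem.2 hmem1)
    · exact h1 (h0 ▸ hc'mem.1)
  have hc'1 : Λ.subconductor - 1 ∉ Λ.carrier := by
    intro h
    have hmem : Λ.subconductor - 1 ∈ {m : ℕ | m ∈ Λ.carrier ∧ Set.Icc m Λ.dominant ⊆ Λ.carrier} := by
      refine ⟨h, fun x hx => ?_⟩
      simp only [Set.mem_Icc] at hx
      rcases Nat.eq_or_lt_of_le hx.1 with heq | hlt'
      · exact heq ▸ h
      · exact hc'mem.2 (Set.mem_Icc.mpr ⟨by omega, hx.2⟩)
    have h2 : Λ.subconductor ≤ Λ.subconductor - 1 := Nat.sInf_le hmem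
    omega
  have hd' : Λ.subdominant ≤ Λ.subconductor - 2 := by
    rw [NumericalSemigroup.subdominant]
    apply csSup_le (Set.nonempty_of_mem (show (0:ℕ) ∈ {n : ℕ | n ∈ Λ.carrier ∧ n < Λ.subconductor} from ⟨Λ.zero_mem, by omega⟩))
    intro n hn
    have : n ≠ Λ.subconductor - 1 := fun h => hc'1 (h ▸ hn.1)
    have := hn.2
    omega
  rw [hdom]
  omega
end

section
/- Every numerical semigroup generated by an interval {i,…,j} is acute. -/
lemma intervalGen_mem_iff (i j : ℕ) (hi : 0 < i) (hij : i ≤ j) (n : ℕ) :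
    n ∈ intervalGen i j ↔ ∃ k : ℕ, k * i ≤ n ∧ n ≤ k * j := by
  constructor
  · rintro ⟨m, rfl⟩
    refine ⟨∑ t ∈ Finset.Icc i j, m t, ?_, ?_⟩
    · rw [Finset.sum_mul]
      exact Finset.sum_le_sum fun t ht => Nat.mul_le_mul le_rfl (Finset.mem_Icc.mp ht).1
    · rw [Finset.sum_mul]
      exact Finset.sum_le_sum fun t ht => Nat.mul_le_mul le_rfl (Finset.mem_Icc.mp ht).2
  · rintro ⟨k, h1, h2⟩
    induction k generalizing n with
    | zero => exact ⟨fun _ => 0, by simp; omega⟩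
    | succ k ih =>
      have e1 : (k+1) * i = k * i + i := by ring
      have e2 : (k+1) * j = k * j + j := by ring
      rw [e1] at h1
      rw [e2] at h2
      set x := max i (n - k * j) with hxdef
      have hkij : k * i ≤ k * j := Nat.mul_le_mul le_rfl hij
      have hx1 : i ≤ x := le_max_left _ _
      have hx2 : x ≤ j := by
        apply max_le hij
        omega
      have hxn : x ≤ n := by
        apply max_le
        · omega
        · omega
      have h4 : k * i ≤ n - x := by
        have hxle : x ≤ n - k * i := by
          apply max_le
          · omega
          · omega
        omega
      have h5 : n - x ≤ k * j := by
        have : n - k * j ≤ x := le_max_right _ _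
        omega
      obtain ⟨m, hm⟩ := ih (n - x) h4 h5
      refine ⟨fun t => m t + if t = x then 1 else 0, ?_⟩
      have hxmem : x ∈ Finset.Icc i j := Finset.mem_Icc.mpr ⟨hx1, hx2⟩
      have key : ∑ t ∈ Finset.Icc i j, (m t + if t = x then 1 else 0) * t
          = (∑ t ∈ Finset.Icc i j, m t * t)
            + ∑ t ∈ Finset.Icc i j, (if t = x then t else 0) := by
        rw [← Finset.sum_add_distrib]
        refine Finset.sum_congr rfl fun t ht => ?_
        by_cases h : t = x <;> simp [h, add_mul]
      rw [key, Finset.sum_ite_eq' (Finset.Icc i j) x (fun t => t), if_pos hxmem, ← hm]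
      omega
theorem stmt13 (Λ : NumericalSemigroup)
    (hint : ∃ i j : ℕ, 0 < i ∧ i ≤ j ∧ Λ.carrier = intervalGen i j) :
    Λ.IsAcute := by
  obtain ⟨i, j, hi, hij, hc⟩ := hint
  have hmem : ∀ n, n ∈ Λ.carrier ↔ ∃ k : ℕ, k * i ≤ n ∧ n ≤ k * j := by
    intro n; rw [hc]; exact intervalGen_mem_iff i j hi hij n
  rcases Nat.lt_or_ge i 2 with h1 | h2
  · -- i = 1 : the whole of ℕ, ordinary
    have hi1 : i = 1 := by omega
    subst hi1
    left
    refine ⟨1, ?_⟩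
    ext n
    constructor
    · intro _
      rcases Nat.eq_zero_or_pos n with h | h
      · exact Or.inl h
      · exact Or.inr h
    · intro _
      refine (hmem n).mpr ⟨n, by omega, ?_⟩
      calc n = n * 1 := by ring
        _ ≤ n * j := Nat.mul_le_mul le_rfl (by omega)
  · -- i ≥ 2
    rcases Nat.eq_or_lt_of_le hij with hji | hji
    · -- j = i : complement infinite, contradiction
      exfalso
      apply Λ.finite_compl.not_infinite
      refine Set.infinite_of_injective_forall_mem
        (f := fun k : ℕ => k * i + 1) ?_ ?_
      · intro a b hab
        simp only at hab
        exact Nat.eq_of_mul_eq_mul_right hi (by omega)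
      · intro k
        simp only [Set.mem_compl_iff]
        intro hk
        obtain ⟨k', h1', h2'⟩ := (hmem _).mp hk
        rw [← hji] at h2'
        rcases le_or_gt k' k with h | h
        · have : k' * i ≤ k * i := Nat.mul_le_mul_right i h
          omega
        · have : (k+1) * i ≤ k' * i := Nat.mul_le_mul_right i h
          have : (k+1) * i = k * i + i := by ring
          omega
    · -- i ≥ 2, j > i
      set S : Set ℕ := {k : ℕ | i - 1 ≤ k * (j - i)} with hS
      have hiS : i ∈ S := by
        have : i * 1 ≤ i * (j - i) := Nat.mul_le_mul le_rfl (by omega)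
        simp only [hS, Set.mem_setOf_eq]
        omega
      set K := sInf S with hKdef
      have hKmem : i - 1 ≤ K * (j - i) := Nat.sInf_mem ⟨i, hiS⟩
      have hKpos : 1 ≤ K := by
        rcases Nat.eq_zero_or_pos K with h | h
        · rw [h] at hKmem; simp at hKmem; omega
        · exact h
      have hmin : ∀ k < K, k * (j - i) ≤ i - 2 := by
        intro k hk
        have := Nat.notMem_of_lt_sInf (hKdef ▸ hk)
        simp only [hS, Set.mem_setOf_eq, not_le] at this
        omega
      have hsplit : ∀ k : ℕ, k * j = k * i + k * (j - i) := by
        intro k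
        rw [← Nat.mul_add]
        congr 1
        omega
      -- everything ≥ K*i is in the carrier
      have hF1 : ∀ n, K * i ≤ n → n ∈ Λ.carrier := by
        intro n hn
        set k := n / i with hkdef
        have hk1 : k * i ≤ n := Nat.div_mul_le_self n i
        have hmod := Nat.div_add_mod n i
        have hmodlt : n % i < i := Nat.mod_lt n (by omega)
        have hk2 : n < k * i + i := by
          have : i * (n / i) = k * i := by rw [hkdef]; ring
          omega
        have hkK : K ≤ k := by
          by_contra h
          push_neg at h
          have h3 : (k+1) * i ≤ K * i := Nat.mul_le_mul_right i (by omega)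
          have h4 : (k+1) * i = k * i + i := by ring
          omega
        have hkji : i - 1 ≤ k * (j - i) :=
          le_trans hKmem (Nat.mul_le_mul_right _ hkK)
        refine (hmem n).mpr ⟨k, hk1, ?_⟩
        have := hsplit k
        omega
      -- upper bound for elements below k*i
      have hub : ∀ n k, n ∈ Λ.carrier → n < k * i → n ≤ (k-1) * j := by
        intro n k hn hlt
        obtain ⟨k', h1', h2'⟩ := (hmem n).mp hn
        have hk'k : k' < k := by
          by_contra h
          push_neg at h
          have : k * i ≤ k' * i := Nat.mul_le_mul_right i h
          omega
        exact le_trans h2' (Nat.mul_le_mul_right _ (by omega))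
      -- gaps just below k*i for 1 ≤ k ≤ K
      have gap : ∀ k, 1 ≤ k → k ≤ K → (k * i - 1) ∉ Λ.carrier := by
        intro k hk1 hkK hmem'
        have hipos : 1 ≤ k * i := by
          have : 1 * 1 ≤ k * i := Nat.mul_le_mul hk1 (by omega)
          omega
        have h3 : k * i - 1 ≤ (k-1) * j := hub _ k hmem' (by omega)
        have h4 : (k-1) * (j - i) ≤ i - 2 := hmin _ (by omega)
        have h5 := hsplit (k-1)
        have h6 : (k-1) * i + i = k * i := by
          have hk' : (k-1) + 1 = k := by omega
          calc (k-1) * i + i = ((k-1) + 1) * i := by ring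
            _ = k * i := by rw [hk']
        omega
      rcases Nat.eq_or_lt_of_le hKpos with hK1 | hK2
    -- K = 1 : ordinary
      · left
        refine ⟨i, ?_⟩
        ext n
        constructor
        · intro hn
          rcases Nat.lt_or_ge n i with h | h
          · left
            have := hub n 1 hn (by omega)
            simpa using this
          · exact Or.inr h
        · rintro (h | h)
          · rw [h]; exact Λ.zero_mem
          · refine hF1 n ?_
            have h' : i ≤ n := h
            have hK1' : K = 1 := hK1.symm
            rw [hK1']
            omega
      · -- K ≥ 2
        have hK2' : 2 ≤ K := hK2
        -- key product identities
        have e1 : K * i = (K-1) * i + i := by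
          have hk' : (K-1) + 1 = K := by omega
          calc K * i = ((K-1) + 1) * i := by rw [hk']
            _ = (K-1) * i + i := by ring
        have e2 : (K-1) * j = (K-2) * j + j := by
          have hk' : (K-2) + 1 = K - 1 := by omega
          calc (K-1) * j = ((K-2) + 1) * j := by rw [hk']
            _ = (K-2) * j + j := by ring
        have e3 : (K-1) * j = (K-1) * i + (K-1) * (j - i) := hsplit (K-1)
        have e4 : (K-2) * j = (K-2) * i + (K-2) * (j - i) := hsplit (K-2)
        have e5 : (K-1) * (j - i) ≤ i - 2 := hmin _ (by omega)
        have e6 : (K-2) * (j - i) ≤ i - 2 := hmin _ (by omega)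
        have e7 : (K-2) * i + i = (K-1) * i := by
          have hk' : (K-2) + 1 = K - 1 := by omega
          calc (K-2) * i + i = ((K-2) + 1) * i := by ring
            _ = (K-1) * i := by rw [hk']
        have hKm1mem : (K-1) * j ∈ Λ.carrier :=
          (hmem _).mpr ⟨K-1, Nat.mul_le_mul le_rfl hij, le_rfl⟩
        have hKm2mem : (K-2) * j ∈ Λ.carrier :=
          (hmem _).mpr ⟨K-2, Nat.mul_le_mul le_rfl hij, le_rfl⟩
        have hdlt : (K-1) * j + 2 ≤ K * i := by omega
        -- conductor
        have hcond : Λ.conductor = K * i := by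
          rw [NumericalSemigroup.conductor]
          apply le_antisymm
          · exact Nat.sInf_le fun n hn => hF1 n hn
          · refine le_csInf ⟨K * i, fun n hn => hF1 n hn⟩ ?_
            intro b hb
            by_contra h
            push_neg at h
            have hipos : 1 ≤ K * i := by
              have : 1 * 1 ≤ K * i := Nat.mul_le_mul hKpos (by omega)
              omega
            exact gap K hKpos le_rfl (hb _ (by omega))
        -- dominant
        have hdom : Λ.dominant = (K-1) * j := by
          rw [NumericalSemigroup.dominant, hcond]
          apply le_antisymm
          · refine csSup_le ⟨(K-1) * j, hKm1mem, by omega⟩ ?_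
            intro n hn
            have := hub n K hn.1 hn.2
            omega
          · refine le_csSup ⟨(K-1) * j, fun n hn => ?_⟩ ⟨hKm1mem, by omega⟩
            have := hub n K hn.1 hn.2
            omega
        -- subconductor
        have hKm1imem : (K-1) * i ∈ Λ.carrier :=
          (hmem _).mpr ⟨K-1, le_rfl, Nat.mul_le_mul le_rfl hij⟩
        have hIccsub : Set.Icc ((K-1) * i) ((K-1) * j) ⊆ Λ.carrier := by
          intro n hn
          exact (hmem n).mpr ⟨K-1, hn.1, hn.2⟩
        have hgapKm1 : ((K-1) * i - 1) ∉ Λ.carrier := gap (K-1) (by omega) (by omega)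
        have hKm1ipos : 2 ≤ (K-1) * i := by
          have : 1 * 2 ≤ (K-1) * i := Nat.mul_le_mul (by omega) h2
          omega
        have hsubc : Λ.subconductor = (K-1) * i := by
          rw [NumericalSemigroup.subconductor, hdom]
          apply le_antisymm
          · exact Nat.sInf_le ⟨hKm1imem, hIccsub⟩
          · refine le_csInf ⟨(K-1) * i, hKm1imem, hIccsub⟩ ?_
            intro m hm
            by_contra h
            push_neg at h
            apply hgapKm1
            apply hm.2
            constructor
            · omega
            · have : (K-1) * i ≤ (K-1) * j := Nat.mul_le_mul le_rfl hij
              omega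
        -- subdominant
        have hsubd : Λ.subdominant = (K-2) * j := by
          rw [NumericalSemigroup.subdominant, hsubc]
          have hKm2lt : (K-2) * j + 2 ≤ (K-1) * i := by omega
          apply le_antisymm
          · refine csSup_le ⟨(K-2) * j, hKm2mem, by omega⟩ ?_
            intro n hn
            have := hub n (K-1) hn.1 hn.2
            have h9 : (K-1) - 1 = K - 2 := by omega
            rw [h9] at this
            omega
          · refine le_csSup ⟨(K-2) * j, fun n hn => ?_⟩ ⟨hKm2mem, by omega⟩
            have := hub n (K-1) hn.1 hn.2
            have h9 : (K-1) - 1 = K - 2 := by omega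
            rw [h9] at this
            omega
        right
        rw [hcond, hdom, hsubc, hsubd]
        omega
end

section
/- Let Λ be a numerical semigroup with genus g, conductor c and enumeration λ. For each index i let g(i) be the number of gaps smaller than λ_i, let D(i) = {l ∈ ℕ \ Λ : λ_i - l ∈ ℕ \ Λ}, and let ν_i = #{j : λ_i - λ_j ∈ Λ}. Then ν_i = i - g(i) + #D(i) + 1 for all i; in particular ν_i = i - g + 1 for all i ≥ 2c - g - 1. -/
/-- `ν_i = #{j : λ_i - λ_j ∈ Λ}`, for `f` the enumeration of `Λ`. -/
noncomputable def NumericalSemigroup.nu (Λ : NumericalSemigroup) (f : ℕ → ℕ) (i : ℕ) : ℕ :=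
  {j : ℕ | j ≤ i ∧ f i - f j ∈ Λ.carrier}.ncard

/-!
Put `s = λ_i`. The reflection `l ↦ s - l` of `[0, s]` shows that `#{l ≤ s : s - l ∈ Λ}` equals
`#(Λ ∩ [0, s]) = i + 1`. Splitting the former according to whether `l ∈ Λ` gives `ν_i` plus the
gaps `l < s` with `s - l ∈ Λ`; the other gaps below `s` are exactly `D(i)`.

Once `λ_i ≥ c`, all gaps lie below `λ_i = i + g ≥ 2c - 1`, and two gaps, both `< c`, cannot add
up to `λ_i`, so `D(i) = ∅`.
-/

namespace Finset

theorem card_filter_range_reflect (p : ℕ → Prop) [DecidablePred p] (n : ℕ) :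
    #{l ∈ range n | p (n - 1 - l)} = #{l ∈ range n | p l} := by
  simp only [card_filter]
  exact sum_range_reflect (fun l => if p l then 1 else 0) n

theorem card_filter_and_add_card_filter_not {α : Type*} (s : Finset α) (p q : α → Prop)
    [DecidablePred p] [DecidablePred q] :
    #{l ∈ s | p l ∧ q l} + #{l ∈ s | ¬p l} = #{l ∈ s | q l} + #{l ∈ s | ¬p l ∧ ¬q l} := by
  simp only [card_filter, ← sum_add_distrib]
  refine sum_congr rfl fun l _ => ?_
  by_cases p l <;> by_cases q l <;> simp [*]

end Finset

namespace Set

theorem compl_inter_Iio_eq_Iic_sdiff {α : Type*} [PartialOrder α] {S : Set α} {s : α}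
    (hs : s ∈ S) : Sᶜ ∩ Iio s = Iic s \ S := by
  ext l
  simp only [mem_sdiff, mem_Iic, mem_inter_iff, mem_compl_iff, mem_Iio]
  exact ⟨fun ⟨hl, hls⟩ => ⟨hls.le, hl⟩,
    fun ⟨hls, hl⟩ => ⟨hl, hls.lt_of_ne (by rintro rfl; exact hl hs)⟩⟩

theorem ncard_inter_Iic_add_ncard_compl_inter_Iio {S : Set ℕ} {s : ℕ} (hs : s ∈ S) :
    (S ∩ Iic s).ncard + (Sᶜ ∩ Iio s).ncard = s + 1 := by
  rw [inter_comm, compl_inter_Iio_eq_Iic_sdiff hs,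
    ncard_inter_add_ncard_sdiff_eq_ncard _ _ (finite_Iic s), ncard_Iic_nat]

theorem ncard_sep_sub_mem_add_ncard_compl_inter_Iio {S : Set ℕ} {s : ℕ} (h0 : 0 ∈ S)
    (hs : s ∈ S) :
    {l ∈ S ∩ Iic s | s - l ∈ S}.ncard + (Sᶜ ∩ Iio s).ncard =
      (S ∩ Iic s).ncard + {l | l ∉ S ∧ s - l ∉ S}.ncard := by
  classical
  set I := Finset.range (s + 1)
  have hI (l : ℕ) : l ∈ I ↔ l ≤ s := Finset.mem_range_succ_iff
  have hsym : {l ∈ S ∩ Iic s | s - l ∈ S} = ↑{l ∈ I | l ∈ S ∧ s - l ∈ S} := by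
    ext l; simp only [Finset.coe_filter, hI, mem_inter_iff, mem_Iic, mem_ofPred_eq]; tauto
  have hgaps : Sᶜ ∩ Iio s = ↑{l ∈ I | l ∉ S} := by
    rw [compl_inter_Iio_eq_Iic_sdiff hs]
    ext l; simp only [Finset.coe_filter, hI, mem_sdiff, mem_Iic, mem_ofPred_eq]
  have helts : S ∩ Iic s = ↑{l ∈ I | l ∈ S} := by
    ext l; simp only [Finset.coe_filter, hI, mem_inter_iff, mem_Iic, mem_ofPred_eq]; tauto
  -- a pair with `l > s` would have `s - l = 0 ∈ S`
  have hpairs : {l | l ∉ S ∧ s - l ∉ S} = ↑{l ∈ I | l ∉ S ∧ s - l ∉ S} := by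
    ext l
    simp only [Finset.coe_filter, hI, mem_ofPred_eq]
    refine ⟨fun h => ⟨?_, h⟩, And.right⟩
    by_contra hls
    exact h.2 (by rwa [Nat.sub_eq_zero_of_le (by omega)])
  have hreflect : (I.filter (s - · ∈ S)).card = (I.filter (· ∈ S)).card := by
    simpa only [add_tsub_cancel_right] using Finset.card_filter_range_reflect (· ∈ S) (s + 1)
  rw [hsym, hgaps, helts, hpairs, ncard_coe_finset, ncard_coe_finset, ncard_coe_finset,
    ncard_coe_finset, ← hreflect]
  exact Finset.card_filter_and_add_card_filter_not I (· ∈ S) (fun l => s - l ∈ S)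

end Set

namespace NumericalSemigroup

open Set

variable {Λ : NumericalSemigroup}

theorem mem_of_conductor_le {n : ℕ} (hn : Λ.conductor ≤ n) : n ∈ Λ.carrier := by
  obtain ⟨M, hM⟩ := Λ.finite_compl.bddAbove
  refine Nat.sInf_mem (s := {c : ℕ | ∀ n, c ≤ n → n ∈ Λ.carrier}) ⟨M + 1, fun m hm => ?_⟩ n hn
  by_contra hgap
  exact absurd (hM hgap) (by omega)

theorem lt_conductor_of_notMem {l : ℕ} (hl : l ∉ Λ.carrier) : l < Λ.conductor := by
  contrapose! hl
  exact mem_of_conductor_le hl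

theorem ncard_compl_inter_Iio_of_conductor_le {s : ℕ} (hs : Λ.conductor ≤ s) :
    (Λ.carrierᶜ ∩ Iio s).ncard = Λ.genus := by
  have hgaps : Λ.carrierᶜ ⊆ Iio s := fun l hl => (lt_conductor_of_notMem hl).trans_le hs
  rw [genus, inter_eq_left.2 hgaps]

theorem setOf_notMem_and_sub_notMem_eq_empty {s : ℕ} (hs : 2 * Λ.conductor ≤ s + 1) :
    {l | l ∉ Λ.carrier ∧ s - l ∉ Λ.carrier} = ∅ := by
  refine eq_empty_of_forall_notMem fun l ⟨hl, hsl⟩ => ?_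
  have hsl_pos : s - l ≠ 0 := fun h => hsl (h ▸ Λ.zero_mem)
  have := lt_conductor_of_notMem hl
  have := lt_conductor_of_notMem hsl
  omega

namespace IsEnum

variable {f : ℕ → ℕ} (hf : Λ.IsEnum f)
include hf

theorem apply_mem (j : ℕ) : f j ∈ Λ.carrier :=
  hf.2 ▸ mem_range_self j

theorem image_Iic (i : ℕ) : f '' Iic i = Λ.carrier ∩ Iic (f i) := by
  ext l
  constructor
  · rintro ⟨j, hj, rfl⟩
    exact ⟨hf.apply_mem j, hf.1.monotone hj⟩
  · rintro ⟨hl, hli⟩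
    obtain ⟨j, rfl⟩ : l ∈ range f := hf.2 ▸ hl
    exact ⟨j, hf.1.le_iff_le.1 hli, rfl⟩

theorem ncard_inter_Iic (i : ℕ) : (Λ.carrier ∩ Iic (f i)).ncard = i + 1 := by
  rw [← hf.image_Iic, ncard_image_of_injective _ hf.1.injective, ncard_Iic_nat]

theorem nu_eq_ncard (i : ℕ) :
    Λ.nu f i = {l ∈ Λ.carrier ∩ Iic (f i) | f i - l ∈ Λ.carrier}.ncard := by
  rw [nu, ← ncard_image_of_injective _ hf.1.injective, ← hf.image_Iic]
  exact congrArg ncard (image_inter_preimage f (Iic i) {l | f i - l ∈ Λ.carrier})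

theorem apply_eq_add_ncard_compl_inter_Iio (i : ℕ) :
    f i = i + (Λ.carrierᶜ ∩ Iio (f i)).ncard := by
  have := ncard_inter_Iic_add_ncard_compl_inter_Iio (hf.apply_mem i)
  rw [hf.ncard_inter_Iic] at this
  omega

-- `c ∈ Λ` has index `c - g`, since all `g` gaps lie below it.
theorem conductor_le_apply {i : ℕ} (hi : Λ.conductor ≤ i + Λ.genus) : Λ.conductor ≤ f i := by
  obtain ⟨k, hk⟩ : Λ.conductor ∈ range f := hf.2 ▸ mem_of_conductor_le le_rfl
  have hfk := hf.apply_eq_add_ncard_compl_inter_Iio k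
  rw [hk, ncard_compl_inter_Iio_of_conductor_le le_rfl] at hfk
  by_contra! h
  have := hf.1.lt_iff_lt.1 (hk ▸ h : f i < f k)
  omega

theorem nu_add_ncard_compl_inter_Iio (i : ℕ) :
    Λ.nu f i + (Λ.carrierᶜ ∩ Iio (f i)).ncard =
      i + {l | l ∉ Λ.carrier ∧ f i - l ∉ Λ.carrier}.ncard + 1 := by
  rw [hf.nu_eq_ncard, ncard_sep_sub_mem_add_ncard_compl_inter_Iio Λ.zero_mem (hf.apply_mem i),
    hf.ncard_inter_Iic]
  omega

theorem nu_add_genus {i : ℕ} (hi : 2 * Λ.conductor ≤ i + Λ.genus + 1) :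
    Λ.nu f i + Λ.genus = i + 1 := by
  have hc : Λ.conductor ≤ f i := hf.conductor_le_apply (by omega)
  have hgaps := ncard_compl_inter_Iio_of_conductor_le hc
  have hfi := hf.apply_eq_add_ncard_compl_inter_Iio i
  rw [hgaps] at hfi
  have hnu := hf.nu_add_ncard_compl_inter_Iio i
  rw [hgaps, setOf_notMem_and_sub_notMem_eq_empty (by omega), ncard_empty] at hnu
  omega

end IsEnum

end NumericalSemigroup

theorem stmt15 (Λ : NumericalSemigroup) (f : ℕ → ℕ) (hf : Λ.IsEnum f) :
    (∀ i : ℕ, Λ.nu f i + (Λ.carrierᶜ ∩ Set.Iio (f i)).ncard =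
      i + ({l : ℕ | l ∉ Λ.carrier ∧ f i - l ∉ Λ.carrier}).ncard + 1) ∧
    (∀ i : ℕ, 2 * Λ.conductor ≤ i + Λ.genus + 1 → Λ.nu f i + Λ.genus = i + 1) :=
  ⟨hf.nu_add_ncard_compl_inter_Iio, fun _ => hf.nu_add_genus⟩
end

section
/- The non-trivial ordinary numerical semigroup with conductor c has τ sequence given by τ_i = 0 for i ≤ c and τ_i = ⌊(i - c + 1)/2⌋ for i > c. -/
/-- `τ_i = max{j : ∃ k, j ≤ k ≤ i and λ_j + λ_k = λ_i}`, for `f` the enumeration of `Λ`. -/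
noncomputable def NumericalSemigroup.tau (Λ : NumericalSemigroup) (f : ℕ → ℕ) (i : ℕ) : ℕ :=
  sSup {j : ℕ | ∃ k : ℕ, j ≤ k ∧ k ≤ i ∧ f j + f k = f i}

theorem stmt19 (Λ : NumericalSemigroup) (c : ℕ) (hc : 2 ≤ c)
    (hΛ : Λ.carrier = insert 0 (Set.Ici c)) (f : ℕ → ℕ) (hf : Λ.IsEnum f) :
    (∀ i : ℕ, i ≤ c → Λ.tau f i = 0) ∧
    (∀ i : ℕ, c < i → Λ.tau f i = (i - c + 1) / 2) := by
  obtain ⟨hmono, hrange⟩ := hf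
  -- explicit enumeration
  set g : ℕ → ℕ := fun n => if n = 0 then 0 else c + n - 1 with hg
  have hgmono : StrictMono g := by
    intro a b hab
    simp only [hg]
    split_ifs <;> omega
  have hgrange : Set.range g = Λ.carrier := by
    rw [hΛ]
    ext x
    constructor
    · rintro ⟨n, rfl⟩
      rcases Nat.eq_zero_or_pos n with rfl | hn
      · simp [hg]
      · simp only [hg, Set.mem_insert_iff, Set.mem_Ici]
        right
        split_ifs with h
        · omega
        · omega
    · rintro (rfl | hx)
      · exact ⟨0, by simp [hg]⟩
      · refine ⟨x - c + 1, ?_⟩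
        simp only [Set.mem_Ici] at hx
        have h1 : x - c + 1 ≠ 0 := by omega
        simp only [hg, h1, if_neg, if_false]
        omega
  have hfg : f = g := (hmono.range_inj hgmono).mp (by rw [hgrange, hrange])
  subst hfg
  -- g values
  have hgv : ∀ n, n ≠ 0 → g n = c + n - 1 := fun n hn => by simp [hg, hn]
  have hg0 : g 0 = 0 := by simp [hg]
  constructor
  · intro i hi
    have hset : {j : ℕ | ∃ k : ℕ, j ≤ k ∧ k ≤ i ∧ g j + g k = g i} = {0} := by
      ext j
      simp only [Set.mem_setOf_eq, Set.mem_singleton_iff]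
      constructor
      · rintro ⟨k, hjk, hki, hsum⟩
        by_contra hj
        have hk : k ≠ 0 := by omega
        have hi0 : i ≠ 0 := by
          rintro rfl; rw [hg0] at hsum; omega
        rw [hgv j hj, hgv k hk, hgv i hi0] at hsum
        omega
      · rintro rfl
        rcases Nat.eq_zero_or_pos i with rfl | hi'
        · exact ⟨0, le_refl _, le_refl _, by simp [hg0]⟩
        · exact ⟨i, Nat.zero_le _, le_refl _, by rw [hg0]; omega⟩
    unfold NumericalSemigroup.tau
    rw [hset, csSup_singleton]
  · intro i hi
    have hi0 : i ≠ 0 := by omega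
    set m := (i - c + 1) / 2 with hm
    have hm1 : 1 ≤ m := by omega
    have hset : {j : ℕ | ∃ k : ℕ, j ≤ k ∧ k ≤ i ∧ g j + g k = g i} = Set.Iic m := by
      ext j
      simp only [Set.mem_setOf_eq, Set.mem_Iic]
      constructor
      · rintro ⟨k, hjk, hki, hsum⟩
        rcases Nat.eq_zero_or_pos j with rfl | hj
        · omega
        · have hk : k ≠ 0 := by omega
          rw [hgv j (by omega), hgv k hk, hgv i hi0] at hsum
          omega
      · intro hjm
        rcases Nat.eq_zero_or_pos j with rfl | hj
        · exact ⟨i, Nat.zero_le _, le_refl _, by rw [hg0]; omega⟩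
        · refine ⟨i - c + 1 - j, by omega, by omega, ?_⟩
          rw [hgv j (by omega), hgv (i - c + 1 - j) (by omega), hgv i hi0]
          omega
    unfold NumericalSemigroup.tau
    rw [hset, csSup_Iic]
end
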